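/- Let T be a tree on ω (a subset of ω^{<ω} closed under initial segments) and let H(T) be the closure in ℓ² of ⋃_{s∈T} v_s, where v_s = { Σ_{n<dom s} ((1+p(n))/√(2^n)) e_{n,s(n)} : p ∈ 2^{dom s} }. If T has no infinite branch, then H(T) = ⋃_{s∈T} v_s ∪ (limit points), and H(T) is countable. -/
import Mathlib


noncomputable abbrev ℓ2 : Type := lp (fun _ : ℕ => ℝ) 2

def b2r (b : Bool) : ℝ := if b then 1 else 0

/-- The finite set `v_s ⊂ ℓ²` attached to the finite sequence `s ∈ ω^{<ω}`:
`v_s = { Σ_{n<dom s} ((1+p(n))/√(2^n))·e_{n,s(n)} : p ∈ 2^{dom s} }`. -/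
noncomputable def vSet (e : ℕ × ℕ → ℓ2) (s : List ℕ) : Set ℓ2 :=
  {x | ∃ p : Fin s.length → Bool,
    x = ∑ n : Fin s.length, ((1 + b2r (p n)) / Real.sqrt (2^(n:ℕ))) • e ((n:ℕ), s.get n)}

/-- A tree on `ω`: a set of finite sequences closed under initial segments. -/
def IsTree (T : Set (List ℕ)) : Prop := ∀ s ∈ T, ∀ t : List ℕ, t <+: s → t ∈ T

/-- `b ∈ ω^ω` is an infinite branch of `T` if all its initial segments lie in `T`. -/
def IsBranch (T : Set (List ℕ)) (b : ℕ → ℕ) : Prop := ∀ n : ℕ, (List.range n).map b ∈ T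

/-- `H(T)`: the closure in `ℓ²` of `⋃_{s ∈ T} v_s`. -/
noncomputable def HT (e : ℕ × ℕ → ℓ2) (T : Set (List ℕ)) : Set ℓ2 :=
  closure (⋃ s ∈ T, vSet e s)


open RealInnerProductSpace

lemma b2r_nonneg (b : Bool) : 0 ≤ b2r b := by unfold b2r; split <;> norm_num

lemma vSet_finite (e : ℕ × ℕ → ℓ2) (s : List ℕ) : (vSet e s).Finite := by
  have h : vSet e s = Set.range (fun p : Fin s.length → Bool =>
      ∑ n : Fin s.length, ((1 + b2r (p n)) / Real.sqrt (2^(n:ℕ))) • e ((n:ℕ), s.get n)) := by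
    ext x; simp [vSet, Set.range, eq_comm]
  rw [h]; exact Set.finite_range _

lemma coeff_eq (e : HilbertBasis (ℕ × ℕ) ℝ ℓ2) {s : List ℕ} {p : ℓ2}
    (hp : p ∈ vSet ⇑e s) (k : Fin s.length) :
    ∃ b : Bool, ⟪(e ((k:ℕ), s.get k) : ℓ2), p⟫ = (1 + b2r b) / Real.sqrt (2^(k:ℕ)) := by
  obtain ⟨pf, rfl⟩ := hp
  refine ⟨pf k, ?_⟩
  rw [inner_sum]
  rw [Finset.sum_eq_single k]
  · rw [real_inner_smul_right, orthonormal_iff_ite.mp e.orthonormal]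
    simp
  · intro n _ hn
    rw [real_inner_smul_right, orthonormal_iff_ite.mp e.orthonormal]
    have : ((k:ℕ), s.get k) ≠ ((n:ℕ), s.get n) := by
      simp only [ne_eq, Prod.mk.injEq, not_and]
      intro h; exact absurd (Fin.ext h.symm) hn
    rw [if_neg this, mul_zero]
  · simp

lemma coeff_zero (e : HilbertBasis (ℕ × ℕ) ℝ ℓ2) {t : List ℕ} {q : ℓ2}
    (hq : q ∈ vSet ⇑e t) (k m : ℕ)
    (h : ∀ n : Fin t.length, ((n:ℕ), t.get n) ≠ (k, m)) :
    ⟪(e (k, m) : ℓ2), q⟫ = 0 := by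
  obtain ⟨pf, rfl⟩ := hq
  rw [inner_sum]
  apply Finset.sum_eq_zero
  intro n _
  rw [real_inner_smul_right, orthonormal_iff_ite.mp e.orthonormal]
  rw [if_neg (Ne.symm (h n)), mul_zero]

lemma sep (e : HilbertBasis (ℕ × ℕ) ℝ ℓ2) {s t : List ℕ} {p q : ℓ2}
    (hp : p ∈ vSet ⇑e s) (hq : q ∈ vSet ⇑e t) (k : Fin s.length)
    (h : ∀ n : Fin t.length, ((n:ℕ), t.get n) ≠ ((k:ℕ), s.get k)) :
    (Real.sqrt (2^(k:ℕ)))⁻¹ ≤ dist p q := by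
  obtain ⟨b, hb⟩ := coeff_eq e hp k
  have h0 := coeff_zero e hq (k:ℕ) (s.get k) h
  have hin : ⟪(e ((k:ℕ), s.get k) : ℓ2), p - q⟫ = (1 + b2r b) / Real.sqrt (2^(k:ℕ)) := by
    rw [inner_sub_right, hb, h0, sub_zero]
  have hsq : (0:ℝ) < Real.sqrt (2^(k:ℕ)) := Real.sqrt_pos.mpr (by positivity)
  have h1 : (Real.sqrt (2^(k:ℕ)))⁻¹ ≤ (1 + b2r b) / Real.sqrt (2^(k:ℕ)) := by
    rw [inv_eq_one_div]
    gcongr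
    linarith [b2r_nonneg b]
  have h2 : |⟪(e ((k:ℕ), s.get k) : ℓ2), p - q⟫| ≤ ‖p - q‖ := by
    have := abs_real_inner_le_norm (e ((k:ℕ), s.get k) : ℓ2) (p - q)
    rwa [e.orthonormal.1, one_mul] at this
  calc (Real.sqrt (2^(k:ℕ)))⁻¹ ≤ (1 + b2r b) / Real.sqrt (2^(k:ℕ)) := h1
    _ = ⟪(e ((k:ℕ), s.get k) : ℓ2), p - q⟫ := hin.symm
    _ ≤ |⟪(e ((k:ℕ), s.get k) : ℓ2), p - q⟫| := le_abs_self _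
    _ ≤ ‖p - q‖ := h2
    _ = dist p q := (dist_eq_norm p q).symm

set_option synthInstance.maxHeartbeats 1000000 in
instance : T1Space ℓ2 := inferInstance

lemma sqrt_two_pow (k : ℕ) : Real.sqrt (2^k) = Real.sqrt 2 ^ k := by
  rw [show (2:ℝ)^k = (Real.sqrt 2 ^ k)^2 by
    rw [← pow_mul, mul_comm, pow_mul, Real.sq_sqrt (by norm_num)],
    Real.sqrt_sq (by positivity)]

/-- if the tree `T` has no infinite branch, then
`H(T) = closure (⋃_{s∈T} v_s)` is countable. -/
theorem HT_countable_of_no_branch (e : HilbertBasis (ℕ × ℕ) ℝ ℓ2)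
    (T : Set (List ℕ)) (hT : IsTree T) (hnb : ¬ ∃ b : ℕ → ℕ, IsBranch T b) :
    (HT (⇑e) T).Countable := by
  have hUc : (⋃ s ∈ T, vSet (⇑e) s).Countable :=
    Set.Countable.biUnion (Set.to_countable T) (fun s _ => (vSet_finite _ s).countable)
  refine Set.Countable.mono (fun x hx => ?_) hUc
  set a : ℕ → ℝ := fun k => (Real.sqrt (2^k))⁻¹ with ha
  have hapos : ∀ k, 0 < a k := fun k => by
    simp only [ha]; positivity
  have hamono : ∀ {k l : ℕ}, k ≤ l → a l ≤ a k := by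
    intro k l h
    simp only [ha]
    apply inv_anti₀ (Real.sqrt_pos.mpr (by positivity))
    exact Real.sqrt_le_sqrt (pow_le_pow_right₀ one_le_two h)
  have hg : ∀ i : ℕ, ∃ y ∈ ⋃ s ∈ T, vSet (⇑e) s, dist x y < a i / 2 := fun i =>
    Metric.mem_closure_iff.mp hx _ (half_pos (hapos i))
  choose g hgU hgd using hg
  have hgU' : ∀ i, ∃ t, ∃ _ : t ∈ T, g i ∈ vSet (⇑e) t := fun i =>
    Set.mem_iUnion₂.mp (hgU i)
  choose s hsT hgv using hgU'
  -- key agreement lemma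
  have key : ∀ i j k, k ≤ i → k ≤ j → ∀ hk : k < (s i).length,
      ∃ hk' : k < (s j).length, (s i).get ⟨k, hk⟩ = (s j).get ⟨k, hk'⟩ := by
    intro i j k hki hkj hk
    by_contra hcon
    push_neg at hcon
    have hd : a k ≤ dist (g i) (g j) := by
      refine sep e (hgv i) (hgv j) ⟨k, hk⟩ ?_
      intro n
      simp only [ne_eq, Prod.mk.injEq, not_and]
      intro hnk hval
      have hk' : k < (s j).length := hnk ▸ n.isLt
      refine hcon hk' ?_
      rw [← hval]
      congr 1
      exact Fin.ext hnk
    have hd2 : dist (g i) (g j) < a k := by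
      calc dist (g i) (g j) ≤ dist (g i) x + dist x (g j) := dist_triangle _ _ _
        _ = dist x (g i) + dist x (g j) := by rw [dist_comm]
        _ < a i / 2 + a j / 2 := add_lt_add (hgd i) (hgd j)
        _ ≤ a k / 2 + a k / 2 := by
            have := hamono hki; have := hamono hkj; linarith
        _ = a k := by ring
    linarith
  by_cases hcase : ∀ n : ℕ, ∃ i, n ≤ i ∧ n < (s i).length
  · exfalso
    choose idx hidx1 hidx2 using hcase
    refine hnb ⟨fun m => (s (idx m)).get ⟨m, hidx2 m⟩, fun n => ?_⟩
    have heq : (List.range n).map (fun m => (s (idx m)).get ⟨m, hidx2 m⟩)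
        = (s (idx n)).take n := by
      apply List.ext_get
      · simp [List.length_take, Nat.le_of_lt (hidx2 n)]
      · intro k h1 h2
        simp only [List.length_map, List.length_range] at h1
        obtain ⟨hk', hEq⟩ := key (idx k) (idx n) k (hidx1 k)
          (le_trans (le_of_lt h1) (hidx1 n)) (hidx2 k)
        simp only [List.get_eq_getElem] at hEq ⊢
        simp only [List.getElem_map, List.getElem_range, List.getElem_take]
        exact hEq
    rw [heq]
    exact hT _ (hsT (idx n)) _ (List.take_prefix n _)
  · push_neg at hcase
    obtain ⟨n, hn⟩ := hcase
    have hss : ∀ i, n ≤ i → s i = s n := by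
      intro i hi
      have hlt : ∀ k, k < (s i).length → k ≤ i ∧ k ≤ n :=
        fun k hk => ⟨le_trans (le_of_lt hk) (le_trans (hn i hi) hi),
          le_trans (le_of_lt hk) (hn i hi)⟩
      have hlen : (s i).length = (s n).length := by
        apply le_antisymm
        · by_contra hc
          push_neg at hc
          obtain ⟨hk', _⟩ := key i n (s n).length
            ((hlt _ hc).1) ((hlt _ hc).2) hc
          exact lt_irrefl _ hk'
        · by_contra hc
          push_neg at hc
          have h1 : (s n).length ≤ n := hn n le_rfl
          obtain ⟨hk', _⟩ := key n i (s i).length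
            (le_trans (le_of_lt hc) h1) (le_trans (le_trans (le_of_lt hc) h1) hi) hc
          exact lt_irrefl _ hk'
      apply List.ext_get hlen
      intro k h1 h2
      obtain ⟨hk', hEq⟩ := key i n k (hlt k h1).1 (hlt k h1).2 h1
      exact hEq
    have htend : Filter.Tendsto g Filter.atTop (nhds x) := by
      rw [tendsto_iff_dist_tendsto_zero]
      refine squeeze_zero (g := fun i => a i / 2) (fun i => dist_nonneg)
        (fun i => ?_) ?_
      · rw [dist_comm]; exact le_of_lt (hgd i)
      · have h2 : Filter.Tendsto (fun i : ℕ => (Real.sqrt 2)⁻¹ ^ i) Filter.atTop (nhds 0) := by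
          apply tendsto_pow_atTop_nhds_zero_of_lt_one (by positivity)
          rw [inv_lt_one_iff₀]
          right
          have : (1:ℝ) < 2 := one_lt_two
          nlinarith [Real.sq_sqrt (show (0:ℝ) ≤ 2 by norm_num),
            Real.sqrt_nonneg 2]
        have h3 : (fun i : ℕ => a i / 2) = fun i => ((Real.sqrt 2)⁻¹ ^ i) / 2 := by
          funext i; simp only [ha, sqrt_two_pow, inv_pow]
        rw [h3]
        simpa using h2.div_const 2
    have hxv : x ∈ vSet (⇑e) (s n) := by
      apply (vSet_finite (⇑e) (s n)).isClosed.mem_of_tendsto htend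
      filter_upwards [Filter.eventually_ge_atTop n] with i hi
      rw [← hss i hi]
      exact hgv i
    exact Set.mem_biUnion (hsT n) hxv
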